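/- Let A be a pointed pseudocompact k-algebra with A/J²(A) finite dimensional. Let P be the unique complete set of primitive orthogonal idempotents of A/J(A) ≅ ∏ k. Then the map Ω sending an algebra splitting s of the canonical projection A → A/J(A) to the set s(P) is a bijection from the set of such splittings onto the set of complete sets of primitive orthogonal idempotents of A. -/

import Mathlib

/-! Throughout, `k` is a perfect field regarded as a discrete topological ring.

A *pseudocompact* `k`-algebra is an associative unital Hausdorff topological `k`-algebra
which has a basis of neighbourhoods of `0` consisting of open two-sided ideals of finite
codimension intersecting in `0`, and which is the inverse limit of its quotients by these
ideals; equivalently (as encoded below) it is a complete Hausdorff topological algebra with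
such a basis of open ideals. -/

/-- The Jacobson radical of a topological algebra: the intersection of the open maximal
left ideals. -/
def openJacobson (A : Type) [Ring A] [TopologicalSpace A] : Ideal A :=
  sInf {I : Ideal A | IsOpen (I : Set A) ∧ I.IsMaximal}

/-- The Jacobson radical `J(A)`, viewed as a `k`-submodule of `A`. -/
def Jrad (k : Type) [Field k] (A : Type) [Ring A] [Algebra k A] [TopologicalSpace A] :
    Submodule k A := (openJacobson A).restrictScalars k

/-- Powers of the radical: `J⁰(A) = A`, `J¹(A) = J(A)`, `Jⁿ(A) = J(A)·Jⁿ⁻¹(A)` for `n > 1`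
(the product of two `k`-submodules being spanned by the products of their elements). -/
def Jpow (k : Type) [Field k] (A : Type) [Ring A] [Algebra k A] [TopologicalSpace A] :
    ℕ → Submodule k A
  | 0 => ⊤
  | 1 => Jrad k A
  | n + 2 => Jrad k A * Jpow k A (n + 1)

/-- `A` is a pseudocompact `k`-algebra: Hausdorff, complete, with a basis of neighbourhoods
of `0` consisting of open two-sided ideals of finite codimension over `k`.  (Hausdorffness is
equivalent to the requirement that these open ideals intersect in `0`, and completeness to
`A` being the inverse limit of its quotients by them.) -/
structure IsPseudocompactAlgebra (k : Type) [Field k] (A : Type) [Ring A] [Algebra k A]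
    [UniformSpace A] [IsUniformAddGroup A] [IsTopologicalRing A] : Prop where
  t2 : T2Space A
  complete : CompleteSpace A
  basis : ∀ s ∈ nhds (0 : A), ∃ I : Ideal A,
    (∀ x ∈ I, ∀ b : A, x * b ∈ I) ∧ IsOpen (I : Set A) ∧
    FiniteDimensional k (A ⧸ I.restrictScalars k) ∧ (I : Set A) ⊆ s

/-- `V` is a pseudocompact `A`-module: Hausdorff, complete, with a basis of neighbourhoods
of `0` consisting of open submodules of finite codimension over `k`. -/
structure IsPseudocompactModule (k : Type) [Field k] (A : Type) [Ring A] [Algebra k A]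
    (V : Type) [AddCommGroup V] [Module k V] [Module A V] [IsScalarTower k A V]
    [UniformSpace V] [IsUniformAddGroup V] : Prop where
  t2 : T2Space V
  complete : CompleteSpace V
  basis : ∀ s ∈ nhds (0 : V), ∃ p : Submodule A V,
    IsOpen (p : Set V) ∧ FiniteDimensional k (V ⧸ p.restrictScalars k) ∧ (p : Set V) ⊆ s

/-- A pseudocompact algebra `A` is *pointed* if `A/J(A)` is isomorphic to a finite product of
copies of `k`; equivalently, there is a surjective `k`-algebra homomorphism `A → kⁿ`
whose kernel is `J(A)`. -/
def IsPointed (k : Type) [Field k] (A : Type) [Ring A] [Algebra k A] [TopologicalSpace A] :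
    Prop :=
  ∃ (n : ℕ) (φ : A →ₐ[k] (Fin n → k)), Function.Surjective φ ∧ RingHom.ker φ = openJacobson A

/-- A *primitive idempotent* is an idempotent which cannot be written as the sum of two
non-zero orthogonal idempotents. -/
def IsPrimitiveIdempotent {A : Type} [Ring A] (e : A) : Prop :=
  IsIdempotentElem e ∧
    ¬ ∃ f g : A, IsIdempotentElem f ∧ IsIdempotentElem g ∧ f ≠ 0 ∧ g ≠ 0 ∧
      f * g = 0 ∧ g * f = 0 ∧ e = f + g

/-- A *complete set of primitive orthogonal idempotents*: a finite set of non-zero,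
pairwise orthogonal, primitive idempotents summing to `1`. -/
def IsCompleteOrthSet {A : Type} [Ring A] (E : Finset A) : Prop :=
  (∀ e ∈ E, IsPrimitiveIdempotent e ∧ e ≠ 0) ∧
  (∀ e ∈ E, ∀ f ∈ E, e ≠ f → e * f = 0 ∧ f * e = 0) ∧
  (∑ e ∈ E, e) = 1

/-!
Elements of `J(A)` are topologically nilpotent: modulo an open ideal `I` of finite codimension
they lie in the Jacobson radical of the artinian ring `A/I`, which is nilpotent. Hence an
idempotent in `J(A)` is zero, and the Newton iteration `x ↦ 3x² - 2x³` started at any `a` with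
`a² - a ∈ J(A)` converges to an idempotent `e ≡ a` modulo `J(A)`; as the iterates are polynomials
in `a` without constant term, `e` stays in any corner `fAf` containing `a`.

The first fact makes the images under a splitting of the coordinate idempotents of `kⁿ`
primitive. The second shows that a primitive idempotent `f` of `A` maps to a primitive
idempotent of `kⁿ`, i.e. to a coordinate idempotent: otherwise a lift inside `fAf` of one of its
summands would split `f`. A complete set `E` therefore meets each coordinate exactly once
(its image sums to `1`, and two elements over the same coordinate cannot be orthogonal), and
`x ↦ ∑ xᵢ eᵢ` is the splitting giving `E`. A splitting is determined by the images of the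
coordinate idempotents, and `φ` recovers the coordinate of each, whence injectivity.
-/

open Polynomial Filter Topology

noncomputable def newtonIdempotentPoly : ℕ → ℤ[X]
  | 0 => X
  | m + 1 => 3 * newtonIdempotentPoly m ^ 2 - 2 * newtonIdempotentPoly m ^ 3

namespace newtonIdempotentPoly

lemma succ_sub (m : ℕ) :
    newtonIdempotentPoly (m + 1) - newtonIdempotentPoly m =
      (newtonIdempotentPoly m ^ 2 - newtonIdempotentPoly m) * (1 - 2 * newtonIdempotentPoly m) := by
  rw [newtonIdempotentPoly]; ring

lemma X_sq_sub_X_pow_dvd (m : ℕ) :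
    (X ^ 2 - X) ^ 2 ^ m ∣ newtonIdempotentPoly m ^ 2 - newtonIdempotentPoly m := by
  induction m with
  | zero => simp [newtonIdempotentPoly]
  | succ m ih =>
    have hsq : newtonIdempotentPoly (m + 1) ^ 2 - newtonIdempotentPoly (m + 1) =
        (newtonIdempotentPoly m ^ 2 - newtonIdempotentPoly m) ^ 2 *
          (4 * (newtonIdempotentPoly m ^ 2 - newtonIdempotentPoly m) - 3) := by
      rw [newtonIdempotentPoly]; ring
    rw [hsq, pow_succ 2 m, pow_mul]
    exact (pow_dvd_pow_of_dvd ih 2).mul_right _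

lemma X_sq_sub_X_dvd_sub_X (m : ℕ) : X ^ 2 - X ∣ newtonIdempotentPoly m - X := by
  induction m with
  | zero => simp [newtonIdempotentPoly]
  | succ m ih =>
    rw [← sub_add_sub_cancel (newtonIdempotentPoly (m + 1)) (newtonIdempotentPoly m), succ_sub]
    exact dvd_add ((dvd_pow_self _ (by positivity)).trans (X_sq_sub_X_pow_dvd m) |>.mul_right _) ih

lemma X_dvd (m : ℕ) : X ∣ newtonIdempotentPoly m :=
  dvd_sub_self_right.mp <|
    (dvd_sub (dvd_pow_self X two_ne_zero) dvd_rfl).trans (X_sq_sub_X_dvd_sub_X m)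

end newtonIdempotentPoly

lemma mul_aeval_eq_of_X_dvd {R : Type*} [Ring R] {a f : R} {p : ℤ[X]} (hp : X ∣ p)
    (hfa : f * a = a) : f * aeval a p = aeval a p := by
  obtain ⟨q, rfl⟩ := hp
  rw [map_mul, aeval_X, ← mul_assoc, hfa]

lemma aeval_mul_eq_of_X_dvd {R : Type*} [Ring R] {a f : R} {p : ℤ[X]} (hp : X ∣ p)
    (haf : a * f = a) : aeval a p * f = aeval a p := by
  obtain ⟨q, rfl⟩ := hp
  rw [mul_comm, map_mul, aeval_X, mul_assoc, haf]

lemma isClosed_openJacobson {A : Type} [Ring A] [TopologicalSpace A] [IsTopologicalAddGroup A] :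
    IsClosed (openJacobson A : Set A) := by
  rw [openJacobson, Submodule.coe_sInf]
  exact isClosed_biInter fun I hI => AddSubgroup.isClosed_of_isOpen I.toAddSubgroup hI.1

lemma pow_mem_of_mem_openJacobson {k A : Type} [Field k] [Ring A] [Algebra k A]
    [TopologicalSpace A] [IsTopologicalAddGroup A] (I : Ideal A) [I.IsTwoSided]
    (hI : IsOpen (I : Set A)) [FiniteDimensional k (A ⧸ I.restrictScalars k)] {c : A}
    (hc : c ∈ openJacobson A) : ∃ d, c ^ d ∈ I := by
  have : FiniteDimensional k (A ⧸ I) :=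
    (Submodule.Quotient.restrictScalarsEquiv k I).finiteDimensional
  have : IsArtinianRing (A ⧸ I) := isArtinian_of_tower k inferInstance
  obtain ⟨d, hd⟩ := IsArtinianRing.isNilpotent_jacobson_bot (R := A ⧸ I)
  have hcJ : Ideal.Quotient.mk I c ∈ Ideal.jacobson ⊥ := by
    refine Ideal.mem_sInf.mpr fun M ⟨_, hM⟩ => ?_
    have hMc : (M.comap (Ideal.Quotient.mk I)).IsMaximal :=
      Ideal.comap_isMaximal_of_surjective _ Ideal.Quotient.mk_surjective
    have hIM : I ≤ M.comap (Ideal.Quotient.mk I) := fun x hx => by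
      simp [Ideal.Quotient.eq_zero_iff_mem.mpr hx]
    exact (sInf_le ⟨AddSubgroup.isOpen_mono (H₁ := I.toAddSubgroup)
      (H₂ := (M.comap _).toAddSubgroup) hIM hI, hMc⟩ :
      openJacobson A ≤ _) hc
  refine ⟨d, Ideal.Quotient.eq_zero_iff_mem.mp ?_⟩
  rw [map_pow, ← Ideal.mem_bot, ← Ideal.zero_eq_bot, ← hd]
  exact Ideal.pow_mem_pow hcJ d

namespace IsPseudocompactAlgebra

variable {k A : Type} [Field k] [Ring A] [Algebra k A] [UniformSpace A] [IsUniformAddGroup A]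
  [IsTopologicalRing A]

lemma tendsto_mul_of_tendsto_zero (hA : IsPseudocompactAlgebra k A) {ι : Type*} {l : Filter ι}
    {x : ι → A} (hx : Tendsto x l (𝓝 0)) (y : ι → A) :
    Tendsto (fun i => x i * y i) l (𝓝 0) := tendsto_def.mpr fun s hs => by
  obtain ⟨I, htwo, hIo, -, hIs⟩ := hA.basis s hs
  filter_upwards [tendsto_def.mp hx _ (hIo.mem_nhds I.zero_mem)] with i hi
  exact hIs (htwo _ hi _)

lemma nonarchimedeanRing (hA : IsPseudocompactAlgebra k A) : NonarchimedeanRing A where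
  is_nonarchimedean U hU :=
    let ⟨I, _, hIo, _, hIU⟩ := hA.basis U hU
    ⟨⟨I.toAddSubgroup, hIo⟩, hIU⟩

lemma isTopologicallyNilpotent_of_mem_openJacobson (hA : IsPseudocompactAlgebra k A) {c : A}
    (hc : c ∈ openJacobson A) : IsTopologicallyNilpotent c := tendsto_def.mpr fun s hs => by
  obtain ⟨I, htwo, hIo, hfd, hIs⟩ := hA.basis s hs
  have : I.IsTwoSided := ⟨fun b ha => htwo _ ha b⟩
  obtain ⟨d, hd⟩ := pow_mem_of_mem_openJacobson (k := k) I hIo hc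
  filter_upwards [eventually_ge_atTop d] with m hm
  rw [Set.mem_preimage, ← Nat.sub_add_cancel hm, pow_add]
  exact hIs (I.mul_mem_left _ hd)

lemma eq_zero_of_isIdempotentElem_of_mem_openJacobson (hA : IsPseudocompactAlgebra k A) {e : A}
    (he : IsIdempotentElem e) (heJ : e ∈ openJacobson A) : e = 0 := by
  have := hA.t2
  refine tendsto_nhds_unique ?_ (hA.isTopologicallyNilpotent_of_mem_openJacobson heJ)
  refine tendsto_const_nhds.congr' ?_
  filter_upwards [eventually_ge_atTop 1] with m hm
  rw [← Nat.sub_add_cancel hm, he.pow_succ_eq]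

theorem exists_isIdempotentElem_sub_mem_openJacobson (hA : IsPseudocompactAlgebra k A) {a f : A}
    (ha : a ^ 2 - a ∈ openJacobson A) (hfa : f * a = a) (haf : a * f = a) :
    ∃ e : A, IsIdempotentElem e ∧ e - a ∈ openJacobson A ∧ f * e = e ∧ e * f = e := by
  have := hA.t2
  have := hA.complete
  have := hA.nonarchimedeanRing
  set u : ℕ → A := fun m => aeval a (newtonIdempotentPoly m)
  have hdefect : Tendsto (fun m => u m ^ 2 - u m) atTop (𝓝 0) := by
    choose q hq using newtonIdempotentPoly.X_sq_sub_X_pow_dvd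
    have hu : ∀ m, u m ^ 2 - u m = (a ^ 2 - a) ^ 2 ^ m * aeval a (q m) := fun m => by
      simpa using congrArg (aeval a) (hq m)
    simp_rw [hu]
    exact hA.tendsto_mul_of_tendsto_zero ((hA.isTopologicallyNilpotent_of_mem_openJacobson ha).comp
      (tendsto_pow_atTop_atTop_of_one_lt one_lt_two)) _
  have hstep : ∀ m, u (m + 1) - u m = (u m ^ 2 - u m) * aeval a (1 - 2 * newtonIdempotentPoly m) :=
    fun m => by simpa using congrArg (aeval a) (newtonIdempotentPoly.succ_sub m)
  obtain ⟨e, he⟩ := cauchySeq_tendsto_of_complete <|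
    NonarchimedeanAddGroup.cauchySeq_of_tendsto_sub_nhds_zero (f := u) <| by
      simpa only [hstep] using hA.tendsto_mul_of_tendsto_zero hdefect _
  refine ⟨e, ?_, ?_, ?_, ?_⟩
  · rw [IsIdempotentElem, ← sq, ← sub_eq_zero]
    exact tendsto_nhds_unique ((he.pow 2).sub he) hdefect
  · refine isClosed_openJacobson.mem_of_tendsto (he.sub_const a) (Eventually.of_forall fun m => ?_)
    obtain ⟨q, hq⟩ := newtonIdempotentPoly.X_sq_sub_X_dvd_sub_X m
    have hu : u m - a = aeval a q * (a ^ 2 - a) := by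
      simpa [mul_comm (X ^ 2 - X)] using congrArg (aeval a) hq
    rw [hu]
    exact (openJacobson A).mul_mem_left _ ha
  · exact tendsto_nhds_unique (he.const_mul f) <| he.congr fun m =>
      (mul_aeval_eq_of_X_dvd (newtonIdempotentPoly.X_dvd m) hfa).symm
  · exact tendsto_nhds_unique (he.mul_const f) <| he.congr fun m =>
      (aeval_mul_eq_of_X_dvd (newtonIdempotentPoly.X_dvd m) haf).symm

end IsPseudocompactAlgebra

section PrimitiveIdempotents

variable {A B : Type} [Ring A] [Ring B]

lemma IsPrimitiveIdempotent.of_map {F : Type} [FunLike F A B] [RingHomClass F A B] (φ : F)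
    (hφ : ∀ g : A, IsIdempotentElem g → φ g = 0 → g = 0) {e : A} (he : IsIdempotentElem e)
    (hφe : IsPrimitiveIdempotent (φ e)) : IsPrimitiveIdempotent e := by
  refine ⟨he, fun ⟨f, g, hf, hg, hf0, hg0, hfg, hgf, hefg⟩ => hφe.2 ?_⟩
  refine ⟨φ f, φ g, hf.map φ, hg.map φ, fun h => hf0 (hφ f hf h), fun h => hg0 (hφ g hg h),
    ?_, ?_, by rw [hefg, map_add]⟩
  · rw [← map_mul, hfg, map_zero]
  · rw [← map_mul, hgf, map_zero]

variable {ι R : Type} [DecidableEq ι] [Ring R]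

lemma Pi.single_one_injective [Nontrivial R] :
    Function.Injective fun i : ι => (Pi.single i 1 : ι → R) :=
  fun i j h => by_contra fun hij => by simpa [hij] using congrFun h i

variable [NoZeroDivisors R]

lemma isPrimitiveIdempotent_single (i : ι) : IsPrimitiveIdempotent (Pi.single i 1 : ι → R) := by
  refine ⟨by rw [IsIdempotentElem, ← Pi.single_mul, one_mul], ?_⟩
  rintro ⟨v, w, hv, hw, hv0, hw0, hvw, hwv, hsum⟩
  have hv' : v = Pi.single i (v i) := by
    rw [← mul_one (v i), Pi.single_mul_right, hsum, mul_add, hv.eq, hvw, add_zero]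
  have hw' : w = Pi.single i (w i) := by
    rw [← mul_one (w i), Pi.single_mul_right, hsum, mul_add, hw.eq, hwv, zero_add]
  rcases mul_eq_zero.mp (congrFun hvw i) with h | h
  · exact hv0 (by rw [hv', h, Pi.single_zero])
  · exact hw0 (by rw [hw', h, Pi.single_zero])

lemma IsPrimitiveIdempotent.exists_eq_single {v : ι → R} (hv : IsPrimitiveIdempotent v)
    (hv0 : v ≠ 0) : ∃ i, v = Pi.single i 1 := by
  obtain ⟨i, hi⟩ := Function.ne_iff.mp hv0
  have hvi : v i = 1 :=
    (IsIdempotentElem.iff_eq_zero_or_one.mp (congrFun hv.1.eq i)).resolve_left hi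
  have hvs : v * Pi.single i 1 = Pi.single i 1 := by rw [← Pi.single_mul_right, hvi, one_mul]
  have hsv : Pi.single i 1 * v = Pi.single i 1 := by rw [← Pi.single_mul_left, hvi, one_mul]
  refine ⟨i, by_contra fun hne => hv.2 ⟨Pi.single i 1, v - Pi.single i 1,
    (isPrimitiveIdempotent_single i).1, ?_, by rwa [Ne, Pi.single_eq_zero_iff, ← hvi],
    sub_ne_zero.mpr hne, ?_, ?_, by abel⟩⟩
  · simp only [IsIdempotentElem, sub_mul, mul_sub, hv.1.eq, hvs, hsv,
      (isPrimitiveIdempotent_single (R := R) i).1.eq]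
    abel
  · rw [mul_sub, hsv, (isPrimitiveIdempotent_single i).1.eq, sub_self]
  · rw [sub_mul, hvs, (isPrimitiveIdempotent_single i).1.eq, sub_self]

end PrimitiveIdempotents

lemma IsPseudocompactAlgebra.isPrimitiveIdempotent_map {k A B : Type} [Field k] [Ring A]
    [Algebra k A] [UniformSpace A] [IsUniformAddGroup A] [IsTopologicalRing A] [CommRing B]
    (hA : IsPseudocompactAlgebra k A) {F : Type} [FunLike F A B] [RingHomClass F A B] (φ : F)
    (hs : Function.Surjective φ) (hker : RingHom.ker φ = openJacobson A) {f : A}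
    (hf : IsPrimitiveIdempotent f) : IsPrimitiveIdempotent (φ f) := by
  refine ⟨hf.1.map φ, ?_⟩
  rintro ⟨v, w, hv, hw, hv0, hw0, hvw, -, hfvw⟩
  obtain ⟨b, rfl⟩ := hs v
  set a := f * (b * f)
  have hφa : φ a = φ b := by
    simp only [a, map_mul, hfvw]
    linear_combination (φ b + 1) * hv.eq + (2 * φ b + w) * hvw
  have ha : a ^ 2 - a ∈ openJacobson A := by
    rw [← hker, RingHom.mem_ker, map_sub, map_pow, hφa, sq, hv.eq, sub_self]
  obtain ⟨e, he, heJ, hfe, hef⟩ := hA.exists_isIdempotentElem_sub_mem_openJacobson (f := f) ha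
    (by rw [← mul_assoc, hf.1.eq]) (by simp only [a, mul_assoc, hf.1.eq])
  have hφe : φ e = φ b := by
    rw [← hker, RingHom.mem_ker, map_sub, sub_eq_zero] at heJ
    rw [heJ, hφa]
  refine hf.2 ⟨e, f - e, he, ?_, fun h => hv0 (by rw [← hφe, h, map_zero]), fun h => hw0 ?_,
    by rw [mul_sub, hef, he.eq, sub_self], by rw [sub_mul, hfe, he.eq, sub_self], by abel⟩
  · simp only [IsIdempotentElem, sub_mul, mul_sub, hf.1.eq, hfe, hef, he.eq]
    abel
  · rw [← add_sub_cancel_left (φ b) w, ← hfvw, ← hφe, ← map_sub, h, map_zero]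

lemma isCompleteOrthSet_image_iff {ι A : Type} [Fintype ι] [DecidableEq A] [Ring A] {ρ : ι → A}
    (hρ : Function.Injective ρ) :
    IsCompleteOrthSet (Finset.univ.image ρ) ↔
      CompleteOrthogonalIdempotents ρ ∧ ∀ i, IsPrimitiveIdempotent (ρ i) ∧ ρ i ≠ 0 := by
  simp only [IsCompleteOrthSet, Finset.forall_mem_image, Finset.mem_univ, true_implies,
    Finset.sum_image hρ.injOn, hρ.ne_iff]
  refine ⟨fun ⟨hprim, horth, hsum⟩ => ⟨⟨⟨fun i => (@hprim i).1.1, fun i j hij => (horth hij).1⟩,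
    hsum⟩, hprim⟩, fun ⟨hρc, hprim⟩ => ⟨hprim, fun i j hij => ⟨hρc.ortho hij, hρc.ortho hij.symm⟩,
    hρc.complete⟩⟩

section PiAlgHom

variable {ι k A : Type} [Fintype ι] [DecidableEq ι] [CommSemiring k] [Ring A] [Algebra k A]
  {e : ι → A}

def CompleteOrthogonalIdempotents.piAlgHom (he : CompleteOrthogonalIdempotents e) :
    (ι → k) →ₐ[k] A :=
  AlgHom.ofLinearMap (Fintype.linearCombination k e)
    (by simp [Fintype.linearCombination_apply, he.complete]) fun x y => by
      simp [Fintype.linearCombination_apply, Finset.sum_mul_sum, he.mul_eq, smul_smul, mul_comm]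

lemma CompleteOrthogonalIdempotents.piAlgHom_single (he : CompleteOrthogonalIdempotents e)
    (i : ι) (r : k) : he.piAlgHom (Pi.single i r) = r • e i :=
  Fintype.linearCombination_apply_single k e i r

end PiAlgHom

lemma AlgHom.pi_ext {ι k A : Type} [Fintype ι] [DecidableEq ι] [CommSemiring k] [Semiring A]
    [Algebra k A] {σ τ : (ι → k) →ₐ[k] A} (h : ∀ i, σ (Pi.single i 1) = τ (Pi.single i 1)) :
    σ = τ :=
  AlgHom.toLinearMap_injective <| LinearMap.pi_ext' fun i => LinearMap.ext_ring (h i)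

section Splittings

variable {k A ι : Type} [Field k] [Ring A] [Algebra k A] [Fintype ι] [DecidableEq ι]
  [DecidableEq A] {φ : A →ₐ[k] (ι → k)}

lemma eq_of_comp_eq_id_of_image_eq {σ τ : (ι → k) →ₐ[k] A} (hσ : φ.comp σ = AlgHom.id k (ι → k))
    (hτ : φ.comp τ = AlgHom.id k (ι → k))
    (h : Finset.univ.image (fun i => σ (Pi.single i 1)) =
      Finset.univ.image fun i => τ (Pi.single i 1)) : σ = τ := by
  have hφσ : ∀ x, φ (σ x) = x := AlgHom.congr_fun hσ
  have hφτ : ∀ x, φ (τ x) = x := AlgHom.congr_fun hτ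
  refine AlgHom.pi_ext fun i => ?_
  obtain ⟨j, -, hj⟩ := Finset.mem_image.mp (h ▸ Finset.mem_image_of_mem _ (Finset.mem_univ i))
  have hji : j = i := Pi.single_one_injective (R := k) <| by
    simpa [hφσ, hφτ] using congrArg φ hj
  rw [← hj, hji]

variable [UniformSpace A] [IsUniformAddGroup A] [IsTopologicalRing A]

lemma isCompleteOrthSet_image_of_comp_eq_id (hA : IsPseudocompactAlgebra k A)
    (hker : RingHom.ker φ = openJacobson A) {σ : (ι → k) →ₐ[k] A}
    (hσ : φ.comp σ = AlgHom.id k (ι → k)) :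
    IsCompleteOrthSet (Finset.univ.image fun i => σ (Pi.single i 1)) := by
  have hφσ : ∀ x, φ (σ x) = x := AlgHom.congr_fun hσ
  have hinj : Function.Injective fun i => σ (Pi.single i 1) := fun i j h =>
    Pi.single_one_injective (R := k) (by simpa [hφσ] using congrArg φ h)
  have hsingle := CompleteOrthogonalIdempotents.single fun _ : ι => k
  refine (isCompleteOrthSet_image_iff hinj).mpr
    ⟨hsingle.map σ.toRingHom, fun i => ⟨?_, fun h => ?_⟩⟩
  · refine .of_map φ (fun g hg hg0 => ?_) ((hsingle.idem i).map σ)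
      (by rw [hφσ]; exact isPrimitiveIdempotent_single i)
    exact hA.eq_zero_of_isIdempotentElem_of_mem_openJacobson hg (hker ▸ hg0)
  · simpa [hφσ] using congrArg φ h

lemma exists_comp_eq_id_of_isCompleteOrthSet (hA : IsPseudocompactAlgebra k A)
    (hs : Function.Surjective φ) (hker : RingHom.ker φ = openJacobson A) {E : Finset A}
    (hE : IsCompleteOrthSet E) :
    ∃ σ : (ι → k) →ₐ[k] A, φ.comp σ = AlgHom.id k (ι → k) ∧
      Finset.univ.image (fun i => σ (Pi.single i 1)) = E := by
  obtain ⟨hprim, horth, hsum⟩ := hE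
  have hsingle : ∀ f ∈ E, ∃ i, φ f = Pi.single i 1 := fun f hf =>
    (hA.isPrimitiveIdempotent_map φ hs hker (hprim f hf).1).exists_eq_single fun h =>
      (hprim f hf).2 (hA.eq_zero_of_isIdempotentElem_of_mem_openJacobson (hprim f hf).1.1
        (hker ▸ h))
  have hexists : ∀ i, ∃ f ∈ E, φ f = Pi.single i 1 := fun i => by
    by_contra! h
    have hcoord : ∑ f ∈ E, φ f i = 1 := by
      simpa using congrFun (congrArg φ hsum) i
    refine one_ne_zero (hcoord.symm.trans (Finset.sum_eq_zero fun f hf => ?_))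
    obtain ⟨j, hj⟩ := hsingle f hf
    rw [hj, Pi.single_apply, if_neg]
    rintro rfl
    exact h f hf hj
  choose ρ hρE hρ using hexists
  have hρinj : Function.Injective ρ := fun i j h =>
    Pi.single_one_injective (R := k) (by simpa only [hρ] using congrArg φ h)
  have himage : Finset.univ.image ρ = E := by
    refine Finset.Subset.antisymm (by simpa [Finset.subset_iff] using hρE) fun f hf => ?_
    obtain ⟨i, hi⟩ := hsingle f hf
    refine Finset.mem_image.mpr ⟨i, Finset.mem_univ i, by_contra fun hne => ?_⟩
    have h0 : φ (ρ i * f) = 0 := by rw [(horth _ (hρE i) f hf hne).1, map_zero]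
    simp [hρ, hi, ← Pi.single_mul] at h0
  obtain ⟨hρc, -⟩ := (isCompleteOrthSet_image_iff hρinj).mp (himage ▸ ⟨hprim, horth, hsum⟩)
  refine ⟨hρc.piAlgHom, AlgHom.pi_ext fun i => ?_, ?_⟩
  · simp [hρc.piAlgHom_single, hρ]
  · simpa [hρc.piAlgHom_single] using himage

end Splittings

theorem splittings_biject_with_complete_orth_sets_general
    (k : Type) [Field k]
    (A : Type) [DecidableEq A] [Ring A] [Algebra k A] [UniformSpace A] [IsUniformAddGroup A] [IsTopologicalRing A]
    (hA : IsPseudocompactAlgebra k A)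
    (n : ℕ) (φ : A →ₐ[k] (Fin n → k)) (hs : Function.Surjective φ)
    (hker : RingHom.ker φ = openJacobson A) :
    (∀ σ : (Fin n → k) →ₐ[k] A, φ.comp σ = AlgHom.id k (Fin n → k) →
        IsCompleteOrthSet (Finset.image (fun i => σ (Pi.single i 1)) Finset.univ)) ∧
    (∀ σ τ : (Fin n → k) →ₐ[k] A,
        φ.comp σ = AlgHom.id k (Fin n → k) → φ.comp τ = AlgHom.id k (Fin n → k) →
        Finset.image (fun i => σ (Pi.single i 1)) Finset.univ
          = Finset.image (fun i => τ (Pi.single i 1)) Finset.univ → σ = τ) ∧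
    (∀ E : Finset A, IsCompleteOrthSet E → ∃ σ : (Fin n → k) →ₐ[k] A,
        φ.comp σ = AlgHom.id k (Fin n → k) ∧
        Finset.image (fun i => σ (Pi.single i 1)) Finset.univ = E) :=
  ⟨fun _ hσ => isCompleteOrthSet_image_of_comp_eq_id hA hker hσ,
    fun _ _ => eq_of_comp_eq_id_of_image_eq,
    fun _ hE => exists_comp_eq_id_of_isCompleteOrthSet hA hs hker hE⟩

/-- Let `A` be a pointed pseudocompact `k`-algebra with `A/J²(A)` finite
dimensional.  Identify `A/J(A)` with `kⁿ = (Fin n → k)` via a surjective algebra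
homomorphism `φ : A → kⁿ` with kernel `J(A)`; the unique complete set `P` of primitive
orthogonal idempotents of `kⁿ` consists of the coordinate idempotents `Pi.single i 1`.
A splitting of the projection `A → A/J(A)` is an algebra homomorphism
`σ : kⁿ → A` with `φ ∘ σ = id`.  Then the map `Ω : σ ↦ σ(P)` is a bijection from the set
of splittings onto the set of complete sets of primitive orthogonal idempotents of `A`:
it takes values in complete sets, is injective, and every complete set arises. -/
theorem splittings_biject_with_complete_orth_sets
    (k : Type) [Field k] [PerfectField k]
    (A : Type) [DecidableEq A] [Ring A] [Algebra k A] [UniformSpace A] [IsUniformAddGroup A] [IsTopologicalRing A]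
    (hA : IsPseudocompactAlgebra k A) (hAp : IsPointed k A)
    (hfd : FiniteDimensional k (A ⧸ Jpow k A 2))
    (n : ℕ) (φ : A →ₐ[k] (Fin n → k)) (hs : Function.Surjective φ)
    (hker : RingHom.ker φ = openJacobson A) :
    (∀ σ : (Fin n → k) →ₐ[k] A, φ.comp σ = AlgHom.id k (Fin n → k) →
        IsCompleteOrthSet (Finset.image (fun i => σ (Pi.single i 1)) Finset.univ)) ∧
    (∀ σ τ : (Fin n → k) →ₐ[k] A,
        φ.comp σ = AlgHom.id k (Fin n → k) → φ.comp τ = AlgHom.id k (Fin n → k) →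
        Finset.image (fun i => σ (Pi.single i 1)) Finset.univ
          = Finset.image (fun i => τ (Pi.single i 1)) Finset.univ → σ = τ) ∧
    (∀ E : Finset A, IsCompleteOrthSet E → ∃ σ : (Fin n → k) →ₐ[k] A,
        φ.comp σ = AlgHom.id k (Fin n → k) ∧
        Finset.image (fun i => σ (Pi.single i 1)) Finset.univ = E) :=
  splittings_biject_with_complete_orth_sets_general k A hA n φ hs hker
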